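/- Let n_c, n_pk, n_pv ≥ 1 be integers, A ∈ ℝ^{n_pk×n_pv} an arbitrary matrix, and f* : ℝ^{n_c} × ℝ^{n_c} → ℝ^{n_c} a symmetric two-point flux (f*(a,b) = f*(b,a) for all a, b). Let u_k (n_pk nodes) and u_v (n_pv nodes) be node-state arrays in ℝ^{n_c}. Set E^{kv} = A and E^{vk} = −A^T, and let Ī_n = 1_n ⊗ I_{n_c} ∈ ℝ^{n·n_c × n_c} denote the block identity vector. Then: Ī_{n_pk}^T·(Ē^{kv} ∘ F(u_k, u_v))·1 + Ī_{n_pv}^T·(Ē^{vk} ∘ F(u_v, u_k))·1 = 0 in ℝ^{n_c}. -/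
import Mathlib


open Matrix

/-- `M̄ = M ⊗ I_{n_c}`: the Kronecker product of a matrix with the `nc × nc`
identity, indexed by pairs (node, component). -/
def blockMat {n m : ℕ} (nc : ℕ) (M : Matrix (Fin n) (Fin m) ℝ) :
    Matrix (Fin n × Fin nc) (Fin m × Fin nc) ℝ :=
  Matrix.of fun jp lq => M jp.1 lq.1 * (if jp.2 = lq.2 then 1 else 0)

/-- The block matrix `F(u, v)` whose `(j, l)` block of size `nc × nc` is
`2·diag(f*(u_j, v_l))`. -/
def fluxMat {n m nc : ℕ} (fstar : (Fin nc → ℝ) → (Fin nc → ℝ) → Fin nc → ℝ)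
    (u : Fin n → Fin nc → ℝ) (v : Fin m → Fin nc → ℝ) :
    Matrix (Fin n × Fin nc) (Fin m × Fin nc) ℝ :=
  Matrix.of fun jp lq => if jp.2 = lq.2 then 2 * fstar (u jp.1) (v lq.1) jp.2 else 0

/-- The block identity vector `Ī_n = 1_n ⊗ I_{n_c} ∈ ℝ^{n·n_c × n_c}`. -/
def blockId (n nc : ℕ) : Matrix (Fin n × Fin nc) (Fin nc) ℝ :=
  Matrix.of fun jp c => if jp.2 = c then 1 else 0

/-- **Componentwise cancellation of interface SAT contributions.** For any matrix
`A`, a symmetric two-point flux `f*`, `E^{kv} = A` and `E^{vk} = −Aᵀ`: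
`Ī_{n_pk}ᵀ·(Ē^{kv} ∘ F(u_k, u_v))·1 + Ī_{n_pv}ᵀ·(Ē^{vk} ∘ F(u_v, u_k))·1 = 0`. -/
theorem interface_sat_conservation_cancel
    (nc npk npv : ℕ) (hnc : 1 ≤ nc) (hnpk : 1 ≤ npk) (hnpv : 1 ≤ npv)
    (A : Matrix (Fin npk) (Fin npv) ℝ)
    (fstar : (Fin nc → ℝ) → (Fin nc → ℝ) → Fin nc → ℝ)
    (hsym : ∀ a b, fstar a b = fstar b a)
    (uk : Fin npk → Fin nc → ℝ) (uv : Fin npv → Fin nc → ℝ) :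
    (blockId npk nc)ᵀ *ᵥ ((blockMat nc A).hadamard (fluxMat fstar uk uv) *ᵥ 1)
      + (blockId npv nc)ᵀ *ᵥ ((blockMat nc (-Aᵀ)).hadamard (fluxMat fstar uv uk) *ᵥ 1)
      = 0 := by
  funext c
  simp only [mulVec, dotProduct, blockId, blockMat, fluxMat, hadamard, transpose,
    Matrix.of_apply, Pi.one_apply, Pi.add_apply, Pi.zero_apply, Pi.neg_apply,
    Matrix.neg_apply, Matrix.transpose_apply, mul_one,
    mul_ite, mul_zero, ite_mul, zero_mul, one_mul]
  simp only [← ite_and, and_self]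
  simp only [Fintype.sum_prod_type, Finset.sum_ite_irrel, Finset.sum_const_zero,
    Finset.sum_ite_eq, Finset.sum_ite_eq', Finset.mem_univ, if_true]
  rw [Finset.sum_comm (f := fun (x : Fin npv) (y : Fin npk) =>
    -A y x * (2 * fstar (uv x) (uk y) c))]
  rw [← Finset.sum_add_distrib]
  apply Finset.sum_eq_zero
  intro j _
  rw [← Finset.sum_add_distrib]
  apply Finset.sum_eq_zero
  intro l _
  rw [hsym (uv l) (uk j)]
  ring
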